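/- arXiv:2305.13554 — 4 statements merged into one kernel-verified Lean document; each statement's English description precedes it below -/
import Mathlib

section
/- Let h be a nonconstant polynomial with complex coefficients having no repeated roots. Then ψ is jointly continuous on ℝ × (0,∞); in particular s ↦ ψ(s,r) is continuous at s = 0 even when the closed disk of radius r contains roots of h. -/
open MeasureTheory

/-- The reduced Kähler area function of the `Aₙ`-smoothing `{uv = h(z)}`:
`ψ(s,r)` is the Lebesgue (area) integral over the closed disk of radius `r` in `ℂ` of
`1 + |h′(z)|² / (2·√(|h(z)|² + s²))`, valued in `[0,∞]`. -/
noncomputable def psiArea (h : Polynomial ℂ) (s r : ℝ) : ENNReal :=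
  ∫⁻ z in Metric.closedBall (0:ℂ) r,
    ENNReal.ofReal
      (1 + ‖(Polynomial.derivative h).eval z‖^2 /
        (2 * Real.sqrt (‖h.eval z‖^2 + s^2)))

/-! Near a simple root `a` of `h` one has `‖h z‖ ≍ ‖z - a‖`, so the `s = 0` density
`1 + ‖h'‖² / (2‖h‖)` has at worst a `‖z - a‖⁻¹` singularity, which is integrable in real
dimension two. Off the roots the density decreases in `s²`, so the `s = 0` density dominates
all others; dominated convergence, together with the fact that circles are Lebesgue-null,
gives joint continuity in `(s, r)`. -/

open Filter Metric Asymptotics Polynomial Set Module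
open scoped ENNReal Topology

theorem HasDerivAt.inv_isBigO_inv_sub {𝕜 : Type*} [NontriviallyNormedField 𝕜] {f : 𝕜 → 𝕜}
    {f' a : 𝕜} (hf : HasDerivAt f f' a) (hf' : f' ≠ 0) (ha : f a = 0) :
    (fun z => (f z)⁻¹) =O[𝓝 a] fun z => (z - a)⁻¹ := by
  have hlin : (fun z => z - a) =O[𝓝 a] fun z => f z - f a :=
    (HasDerivAtFilter.isTheta_sub hf hf').isBigO_symm.comp_tendsto
      (tendsto_id.prodMk tendsto_const_pure)
  simpa [ha] using hlin.inv_rev (Eventually.of_forall fun z hz => by simp [sub_eq_zero.1 hz])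

theorem locallyIntegrable_inv_norm_sub {E : Type*} [NormedAddCommGroup E] [NormedSpace ℝ E]
    [FiniteDimensional ℝ E] [MeasurableSpace E] [BorelSpace E] (μ : Measure E)
    [μ.IsAddHaarMeasure] (hd : 1 < finrank ℝ E) (a : E) :
    LocallyIntegrable (fun x => ‖x - a‖⁻¹) μ := by
  have h₀ : LocallyIntegrable (fun x : E => ‖x‖⁻¹) μ :=
    locallyIntegrable_of_norm_le_rpow (C := 1) (α := 1) hd.le (by exact_mod_cast hd)
      (ae_of_all _ fun x => by simp [Real.rpow_neg_one]) (by fun_prop)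
  rw [← map_sub_right_eq_self μ a] at h₀
  exact (locallyIntegrable_map_homeomorph (Homeomorph.subRight a)).1 h₀

theorem locallyIntegrable_div_norm_of_deriv_ne_zero {f : ℂ → ℂ} {g : ℂ → ℝ}
    (hf : Differentiable ℂ f) (hg : Continuous g) (hroot : ∀ a, f a = 0 → deriv f a ≠ 0) :
    LocallyIntegrable (fun z => g z / ‖f z‖) volume := by
  intro a
  have hmeas : StronglyMeasurableAtFilter (fun z => g z / ‖f z‖) (𝓝 a) volume :=
    (hg.measurable.div hf.continuous.norm.measurable).stronglyMeasurable.stronglyMeasurableAtFilter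
  by_cases ha : f a = 0
  · have hO : (fun z => g z / ‖f z‖) =O[𝓝 a] fun z => ‖z - a‖⁻¹ := by
      simpa [div_eq_mul_inv] using (hg.continuousAt.isBigO_one ℝ).mul
        ((hf a).hasDerivAt.inv_isBigO_inv_sub (hroot a ha) ha).norm_left.norm_right
    exact hO.integrableAtFilter hmeas (locallyIntegrable_inv_norm_sub volume (by simp) a a)
  · have hcont : ContinuousAt (fun z => g z / ‖f z‖) a :=
      hg.continuousAt.div (hf a).continuousAt.norm (by simpa using ha)
    exact (hcont.isBigO_one ℝ).integrableAtFilter hmeas (locallyIntegrable_const (1 : ℝ) a)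

theorem continuousAt_indicator_closedBall_apply {α β E : Type*} [TopologicalSpace α]
    [TopologicalSpace β] [Zero β] [PseudoMetricSpace E] {F : α → E → β} {c z : E} {s₀ : α}
    {r₀ : ℝ} (hz : dist z c ≠ r₀) (hF : ContinuousAt (F · z) s₀) :
    ContinuousAt (fun p : α × ℝ => (closedBall c p.2).indicator (F p.1) z) (s₀, r₀) := by
  rcases hz.lt_or_gt with hlt | hgt
  · refine (hF.comp continuousAt_fst).congr ?_
    filter_upwards [continuousAt_snd.eventually (lt_mem_nhds hlt)] with p hp
    exact (indicator_of_mem (mem_closedBall.2 hp.le) _).symm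
  · refine (continuousAt_const (y := 0)).congr ?_
    filter_upwards [continuousAt_snd.eventually (gt_mem_nhds hgt)] with p hp
    exact (indicator_of_notMem (fun h => (mem_closedBall.1 h).not_gt hp) _).symm

theorem continuousAt_setLIntegral_closedBall {α E : Type*} [TopologicalSpace α]
    [FirstCountableTopology α] [NormedAddCommGroup E] [NormedSpace ℝ E] [FiniteDimensional ℝ E]
    [Nontrivial E] [MeasurableSpace E] [BorelSpace E] {μ : Measure E} [μ.IsAddHaarMeasure]
    {F : α → E → ℝ≥0∞} {G : E → ℝ≥0∞} {c : E} {s₀ : α} {r₀ R : ℝ} (hR : r₀ < R)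
    (hF_meas : ∀ᶠ s in 𝓝 s₀, AEMeasurable (F s) μ) (hF_le : ∀ᶠ s in 𝓝 s₀, F s ≤ᵐ[μ] G)
    (hG : ∫⁻ z in closedBall c R, G z ∂μ ≠ ∞) (hF_cont : ∀ᵐ z ∂μ, ContinuousAt (F · z) s₀) :
    ContinuousAt (fun p : α × ℝ => ∫⁻ z in closedBall c p.2, F p.1 z ∂μ) (s₀, r₀) := by
  simp only [ContinuousAt, ← lintegral_indicator measurableSet_closedBall]
  have hr : ∀ᶠ p : α × ℝ in 𝓝 (s₀, r₀), p.2 < R := continuousAt_snd.eventually (gt_mem_nhds hR)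
  refine tendsto_lintegral_filter_of_dominated_convergence' ((closedBall c R).indicator G) ?_ ?_
    (by rwa [lintegral_indicator measurableSet_closedBall]) ?_
  · filter_upwards [continuousAt_fst.eventually hF_meas] with p hp
    exact hp.indicator measurableSet_closedBall
  · filter_upwards [continuousAt_fst.eventually hF_le, hr] with p hp hpR
    filter_upwards [hp] with z hz
    exact (indicator_le_indicator hz).trans
      (indicator_le_indicator_of_subset (closedBall_subset_closedBall hpR.le) (fun _ => zero_le) z)
  · have hsphere : ∀ᵐ z ∂μ, dist z c ≠ r₀ := by
      rw [ae_iff]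
      simp only [ne_eq, not_not]
      exact Measure.addHaar_sphere μ c r₀
    filter_upwards [hF_cont, hsphere] with z hz hzr
    exact continuousAt_indicator_closedBall_apply hzr hz

theorem Squarefree.eval_derivative_ne_zero {K : Type*} [Field K] [PerfectField K] {h : K[X]}
    (hsq : Squarefree h) {z : K} (hz : h.eval z = 0) : h.derivative.eval z ≠ 0 :=
  (PerfectField.separable_iff_squarefree.2 hsq).eval₂_derivative_ne_zero (RingHom.id K) hz

noncomputable def psiDensity (h : ℂ[X]) (s : ℝ) (z : ℂ) : ℝ≥0∞ :=
  ENNReal.ofReal (1 + ‖h.derivative.eval z‖ ^ 2 / (2 * √(‖h.eval z‖ ^ 2 + s ^ 2)))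

theorem psiArea_eq (h : ℂ[X]) (s r : ℝ) :
    psiArea h s r = ∫⁻ z in closedBall 0 r, psiDensity h s z := rfl

theorem psiDensity_le_psiDensity_zero {h : ℂ[X]} (s : ℝ) {z : ℂ} (hz : h.eval z ≠ 0) :
    psiDensity h s z ≤ psiDensity h 0 z := by
  unfold psiDensity
  gcongr ENNReal.ofReal (1 + _ / (2 * √(_ + ?_)))
  simpa using sq_nonneg s

theorem continuous_psiDensity_apply {h : ℂ[X]} {z : ℂ} (hz : h.eval z ≠ 0) :
    Continuous (psiDensity h · z) := by
  have hden : ∀ s : ℝ, 2 * √(‖h.eval z‖ ^ 2 + s ^ 2) ≠ 0 := fun s => by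
    have : 0 < ‖h.eval z‖ := norm_pos_iff.2 hz
    positivity
  exact ENNReal.continuous_ofReal.comp
    (continuous_const.add (continuous_const.div (by fun_prop) hden))

theorem psiArea_zero_lt_top {h : ℂ[X]} (hsq : Squarefree h) (R : ℝ) : psiArea h 0 R < ∞ := by
  have hint : LocallyIntegrable
      (fun z => 1 + ‖h.derivative.eval z‖ ^ 2 / 2 / ‖h.eval z‖) volume :=
    (locallyIntegrable_const 1).add <| locallyIntegrable_div_norm_of_deriv_ne_zero
      h.differentiable (by fun_prop) fun z hz => by
        simpa [Polynomial.deriv] using hsq.eval_derivative_ne_zero hz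
  have := (hint.integrableOn_isCompact (isCompact_closedBall 0 R)).setLIntegral_lt_top
  simpa [psiArea_eq, psiDensity, div_div, Real.sqrt_sq_eq_abs] using this

theorem continuousAt_psiArea {h : ℂ[X]} (hsq : Squarefree h) (s₀ r₀ : ℝ) :
    ContinuousAt (fun p : ℝ × ℝ => psiArea h p.1 p.2) (s₀, r₀) := by
  have hroots : ∀ᵐ z ∂volume, h.eval z ≠ 0 := by
    rw [ae_iff]
    simpa using (Polynomial.finite_setOfPred_isRoot hsq.ne_zero).measure_zero volume
  simp only [psiArea_eq]
  refine continuousAt_setLIntegral_closedBall (lt_add_one r₀)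
    (.of_forall fun s => Measurable.aemeasurable (by unfold psiDensity; fun_prop))
    (.of_forall fun s => ?_) (psiArea_zero_lt_top hsq (r₀ + 1)).ne ?_
  · filter_upwards [hroots] with z hz using psiDensity_le_psiDensity_zero s hz
  · filter_upwards [hroots] with z hz using (continuous_psiDensity_apply hz).continuousAt

theorem psiArea_continuousOn_general
    (h : Polynomial ℂ) (hsq : Squarefree h) :
    ContinuousOn (fun p : ℝ × ℝ => psiArea h p.1 p.2) (Set.univ ×ˢ Set.Ioi (0:ℝ)) ∧
    (∀ r : ℝ, 0 < r → ContinuousAt (fun s => psiArea h s r) 0) :=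
  ⟨fun p _ => (continuousAt_psiArea hsq p.1 p.2).continuousWithinAt,
    fun r _ => (continuousAt_psiArea hsq 0 r).comp (f := fun s : ℝ => (s, r)) (by fun_prop)⟩

/-- For a nonconstant polynomial `h` with no repeated roots, `ψ` is jointly
continuous on `ℝ × (0,∞)`; in particular `s ↦ ψ(s,r)` is continuous at `s = 0` even when
the closed disk of radius `r` contains roots of `h`. -/
theorem psiArea_continuousOn
    (h : Polynomial ℂ) (hdeg : 0 < h.natDegree) (hsq : Squarefree h) :
    ContinuousOn (fun p : ℝ × ℝ => psiArea h p.1 p.2) (Set.univ ×ˢ Set.Ioi (0:ℝ)) ∧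
    (∀ r : ℝ, 0 < r → ContinuousAt (fun s => psiArea h s r) 0) :=
  psiArea_continuousOn_general h hsq
end

section
/- Let ψ_0 < ψ_1 < ⋯ < ψ_n be real numbers, let τ ≥ 0, let k₀ ∈ {0, …, n+1}, and let c ∈ ℝ satisfy ψ_{k₀−1} < c < ψ_{k₀} (with the conventions ψ_{−1} = −∞ and ψ_{n+1} = +∞). Then for every k ∈ {0, …, n+1}: {c + (k₀ − k)·τ, ψ_0, …, ψ_n}_[k] equals ψ_k if k < k₀, equals c if k = k₀, and equals ψ_{k−1} if k > k₀. In particular {c + (k₀ − k)·τ, ψ_0, …, ψ_n}_[k] = {c, ψ_0, …, ψ_n}_[k] for all k. -/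
/-!
Sorting `x ::ₘ s` is inserting `x` into the sorted list of `s`, and only the position where `x`
lands matters. For `k < k₀` the shifted value is `≥ c`, so it lands after `ψ 0, …, ψ k`; for
`k > k₀` it is `≤ c < ψ (k - 1)`, so it lands before `ψ (k - 1)`; for `k = k₀` it is `c` itself,
which lands exactly at position `k₀`. The second claim is the first one at `τ = 0`.
-/

/-- The `(k+1)`-th *order statistic* of a finite multiset of reals: the entry at index `k`
of the list sorted in nondecreasing order (junk value `0` if `k` is out of range). -/
noncomputable def orderStat (s : Multiset ℝ) (k : ℕ) : ℝ := (s.sort (· ≤ ·)).getD k 0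

namespace List

variable {α : Type*} [LinearOrder α] {x : α} {l : List α} {k : ℕ}

theorem getElem?_orderedInsert_of_lt (hk : k < l.length)
    (h : ∀ i (hi : i < l.length), i ≤ k → l[i] < x) :
    (l.orderedInsert (· ≤ ·) x)[k]? = l[k]? := by
  induction l generalizing k with
  | nil => simp at hk
  | cons a l ih =>
    have hax : a < x := h 0 (by simp) k.zero_le
    rw [orderedInsert_of_not_le (· ≤ ·) _ hax.not_ge]
    cases k with
    | zero => rfl
    | succ k =>
      rw [getElem?_cons_succ, getElem?_cons_succ]
      exact ih (by simpa using hk) fun i hi hik => h (i + 1) (by simpa using hi) (by omega)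

theorem getElem?_orderedInsert_self (hk : k ≤ l.length)
    (hlt : ∀ i (hi : i < l.length), i < k → l[i] < x) (hle : ∀ y ∈ l[k]?, x ≤ y) :
    (l.orderedInsert (· ≤ ·) x)[k]? = some x := by
  induction l generalizing k with
  | nil => simp_all
  | cons a l ih =>
    cases k with
    | zero => rw [orderedInsert_cons_of_le _ _ (hle a rfl)]; rfl
    | succ k =>
      have hax : a < x := hlt 0 (by simp) k.zero_lt_succ
      rw [orderedInsert_of_not_le (· ≤ ·) _ hax.not_ge, getElem?_cons_succ]
      exact ih (by simpa using hk) (fun i hi hik => hlt (i + 1) (by simpa using hi) (by omega)) hle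

theorem getElem?_succ_orderedInsert_of_le (h : ∀ y ∈ l[k]?, x ≤ y) :
    (l.orderedInsert (· ≤ ·) x)[k + 1]? = l[k]? := by
  induction l generalizing k with
  | nil => simp
  | cons a l ih =>
    by_cases hxa : x ≤ a
    · rw [orderedInsert_cons_of_le _ _ hxa, getElem?_cons_succ]
    · rw [orderedInsert_of_not_le _ _ hxa]
      cases k with
      | zero => exact absurd (h a rfl) hxa
      | succ k => exact ih h

end List

namespace Multiset

variable {α : Type*} [LinearOrder α]

theorem sort_cons_eq_orderedInsert (x : α) (s : Multiset α) :
    (x ::ₘ s).sort (· ≤ ·) = (s.sort (· ≤ ·)).orderedInsert (· ≤ ·) x := by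
  induction s using Quot.inductionOn
  simp [List.mergeSort_eq_insertionSort]

theorem sort_map_univ_of_monotone {n : ℕ} {f : Fin n → α} (hf : Monotone f) :
    (Finset.univ.val.map f).sort (· ≤ ·) = List.ofFn f := by
  rw [Fin.univ_val_map, coe_sort]
  exact List.mergeSort_eq_self _ (List.sortedLE_ofFn_iff.2 hf).pairwise

end Multiset

theorem orderStat_cons_map_univ {n : ℕ} {ψ : Fin n → ℝ} (hψ : Monotone ψ) (x : ℝ) (k : ℕ) :
    orderStat (x ::ₘ Finset.univ.val.map ψ) k
      = ((List.ofFn ψ).orderedInsert (· ≤ ·) x)[k]?.getD 0 := by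
  rw [orderStat, Multiset.sort_cons_eq_orderedInsert, Multiset.sort_map_univ_of_monotone hψ,
    List.getD_eq_getElem?_getD]

theorem orderStat_cons_shift {n : ℕ} {ψ : Fin (n+1) → ℝ} (hψ : Monotone ψ)
    {τ : ℝ} (hτ : 0 ≤ τ) {k₀ : ℕ} (hk₀ : k₀ ≤ n + 1) {c : ℝ}
    (hlow : ∀ j : Fin (n+1), (j:ℕ) < k₀ → ψ j < c)
    (hhigh : ∀ j : Fin (n+1), k₀ ≤ (j:ℕ) → c ≤ ψ j) {k : ℕ} (hk : k ≤ n + 1) :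
    orderStat ((c + ((k₀:ℝ) - (k:ℝ)) * τ) ::ₘ Finset.univ.val.map ψ) k
      = if _ : k < k₀ then ψ ⟨k, by omega⟩
        else if _ : k = k₀ then c
        else ψ ⟨k - 1, by omega⟩ := by
  rw [orderStat_cons_map_univ hψ]
  split_ifs with hlt heq
  · have hkn : k < n + 1 := by omega
    have hcx : c ≤ c + (k₀ - k : ℝ) * τ :=
      le_add_of_nonneg_right (mul_nonneg (sub_nonneg.2 (by exact_mod_cast hlt.le)) hτ)
    rw [List.getElem?_orderedInsert_of_lt (by rwa [List.length_ofFn]) fun i hi hik => by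
      simp only [List.length_ofFn, List.getElem_ofFn] at hi ⊢
      exact (hlow ⟨i, hi⟩ (hik.trans_lt hlt)).trans_le hcx]
    rw [List.getElem?_ofFn, dif_pos hkn, Option.getD_some]
  · have hle : ∀ y ∈ (List.ofFn ψ)[k₀]?, c ≤ y := fun y hy => by
      rw [List.getElem?_ofFn] at hy
      split at hy
      · cases hy
        exact hhigh _ le_rfl
      · cases hy
    rw [heq, sub_self, zero_mul, add_zero, List.getElem?_orderedInsert_self (by rwa [List.length_ofFn])
      (fun i hi hik => by
        simp only [List.length_ofFn, List.getElem_ofFn] at hi ⊢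
        exact hlow ⟨i, hi⟩ hik) hle]
    rfl
  · obtain ⟨k', hk'⟩ := Nat.exists_eq_add_one.2 (by omega : 0 < k)
    have hk'n : k' < n + 1 := by omega
    have hxc : c + (k₀ - k : ℝ) * τ ≤ c :=
      add_le_of_nonpos_right
        (mul_nonpos_of_nonpos_of_nonneg (sub_nonpos.2 (by exact_mod_cast (not_lt.1 hlt))) hτ)
    simp only [hk', Nat.add_sub_cancel] at hxc ⊢
    rw [List.getElem?_succ_orderedInsert_of_le fun y hy => by
      rw [List.getElem?_ofFn, dif_pos hk'n] at hy
      cases hy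
      exact hxc.trans (hhigh ⟨k', hk'n⟩ (by rw [Fin.val_mk]; omega))]
    rw [List.getElem?_ofFn, dif_pos hk'n, Option.getD_some]

/-- Let `ψ 0 < ⋯ < ψ n`, `τ ≥ 0`, `k₀ ∈ {0, …, n+1}` and
`ψ (k₀−1) < c < ψ k₀` (conventions `ψ₋₁ = −∞`, `ψ_{n+1} = +∞`, encoded by quantifying
over all indices below/above `k₀`).  Then for every `k ∈ {0, …, n+1}` the order statistic
`{c + (k₀−k)·τ, ψ 0, …, ψ n}_[k]` equals `ψ k` if `k < k₀`, `c` if `k = k₀`, and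
`ψ (k−1)` if `k > k₀`; in particular it equals `{c, ψ 0, …, ψ n}_[k]`. -/
theorem orderStat_shift (n : ℕ) (ψ : Fin (n+1) → ℝ) (hψ : StrictMono ψ)
    (τ : ℝ) (hτ : 0 ≤ τ) (k₀ : Fin (n+2)) (c : ℝ)
    (hlow : ∀ j : Fin (n+1), (j:ℕ) < (k₀:ℕ) → ψ j < c)
    (hhigh : ∀ j : Fin (n+1), (k₀:ℕ) ≤ (j:ℕ) → c < ψ j) :
    (∀ k : Fin (n+2),
      orderStat ((c + (((k₀:ℕ):ℝ) - ((k:ℕ):ℝ)) * τ) ::ₘ Finset.univ.val.map ψ) (k:ℕ)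
        = if h1 : (k:ℕ) < (k₀:ℕ) then ψ ⟨(k:ℕ), by omega⟩
          else if h2 : (k:ℕ) = (k₀:ℕ) then c
          else ψ ⟨(k:ℕ) - 1, by omega⟩) ∧
    (∀ k : Fin (n+2),
      orderStat ((c + (((k₀:ℕ):ℝ) - ((k:ℕ):ℝ)) * τ) ::ₘ Finset.univ.val.map ψ) (k:ℕ)
        = orderStat (c ::ₘ Finset.univ.val.map ψ) (k:ℕ)) := by
  have shift {σ : ℝ} (hσ : 0 ≤ σ) (k : Fin (n+2)) :=
    orderStat_cons_shift hψ.monotone hσ k₀.is_le hlow (fun j hj => (hhigh j hj).le) k.is_le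
  refine ⟨shift hτ, fun k => ?_⟩
  rw [shift hτ k, ← shift le_rfl k, mul_zero, add_zero]
end

section
/- The image of F over all pairs (x, y) with x ∈ (Λ^×)^(n+2), y ∈ Λ^× and ∏_{j=0}^{n+1} x_j = 1 + y equals the image of γ, i.e. {F(x,y) : ∏_j x_j = 1 + y} = {γ(s,c) : (s,c) ∈ ℝ²}. -/
/-- The Novikov field `Λ = ℂ((T^ℝ))`, modeled by Hahn series. -/
abbrev Nov : Type := HahnSeries ℝ ℂ

/-- The additive valuation `val : Λ → ℝ` (the order of a nonzero Hahn series;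
junk value at `0`). -/
noncomputable def val (x : Nov) : ℝ := x.order

/-- The map `γ : ℝ² → ℝ^{n+3}`, `γ(s,c) = (γ₀(s,c), …, γ_{n+1}(s,c), s)` where
`γ_k(s,c) = {c, ψ 0 s, …, ψ n s}_[k]` is the `(k+1)`-th order statistic. -/
noncomputable def gammaMap (n : ℕ) (ψ : Fin (n+1) → ℝ → ℝ) (p : ℝ × ℝ) :
    Fin (n+3) → ℝ :=
  fun i => if (i : ℕ) = n + 2 then p.1
    else orderStat (p.2 ::ₘ Finset.univ.val.map (fun j => ψ j p.1)) (i : ℕ)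

/-- The tropically continuous fibration `F` in homogeneous coordinates:
`F_k(x,y) = {Σ_j (j−k)·val(x_j) + k·min(0, val y), ψ 0 (val y), …, ψ n (val y)}_[k]`
for `0 ≤ k ≤ n+1`, and last component `val y`. -/
noncomputable def Fmap (n : ℕ) (ψ : Fin (n+1) → ℝ → ℝ)
    (x : Fin (n+2) → Nov) (y : Nov) : Fin (n+3) → ℝ :=
  fun i => if (i : ℕ) = n + 2 then val y
    else orderStat
      (((∑ j : Fin (n+2), (((j:ℕ):ℝ) - ((i:ℕ):ℝ)) * val (x j))
          + ((i:ℕ):ℝ) * min 0 (val y))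
        ::ₘ Finset.univ.val.map (fun j => ψ j (val y))) (i : ℕ)

/-!
The first entry `a_k` of the multiset defining `F_k` equals
`∑ j·val xⱼ - k·(val (1 + y) - min 0 (val y))`, since `val` turns `∏ xⱼ = 1 + y` into
`∑ val xⱼ = val (1 + y)`; by the ultrametric inequality `k ↦ a_k` is antitone.
For `ψ₀ < ⋯ < ψₙ`, the `k`-th order statistic of `{w, ψ₀, …, ψₙ}` is `ψₖ` when `w ≥ ψₖ` and
`ψₖ₋₁` when `w ≤ ψₖ₋₁`. So if `K` is the last index with `a_K > ψ_{K-1}`, the constant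
`c = min a_K ψ_K` (with `ψ_{n+1} = ∞`) has the same order statistics as the antitone sequence
`a`, and `F(x,y) = γ(val y, c)`. Conversely `γ(s,c) = F(x,y)` for `y = T^s` and
`x = ((1+y)T^{-c}, T^c, 1, …, 1)`.
-/

namespace List
variable {α : Type*} [LinearOrder α] {l : List α} {k : ℕ} {v : α}

theorem Pairwise.getElem_le_of_lt_countP (hl : l.Pairwise (· ≤ ·)) (hk : k < l.length)
    (h : k < l.countP (· ≤ v)) : l[k] ≤ v := by
  by_contra! hv
  have hdrop : (l.drop k).countP (· ≤ v) = 0 := by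
    rw [countP_eq_zero]
    intro a ha
    obtain ⟨i, hi, rfl⟩ := mem_iff_getElem.1 ha
    rw [getElem_drop]
    simpa using hv.trans_le (hl.rel_get_of_le (a := ⟨k, hk⟩) (b := ⟨k + i, by simp at hi; omega⟩)
      (by simp))
  have htake : (l.take k).countP (· ≤ v) ≤ k := countP_le_length.trans (length_take_le _ _)
  rw [← take_append_drop k l, countP_append, hdrop] at h
  omega

theorem Pairwise.le_getElem_of_countP_le (hl : l.Pairwise (· ≤ ·)) (hk : k < l.length)
    (h : l.countP (· < v) ≤ k) : v ≤ l[k] := by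
  by_contra! hv
  have htake : (l.take (k + 1)).countP (· < v) = k + 1 := by
    rw [countP_eq_length.2, length_take]
    · omega
    intro a ha
    obtain ⟨i, hi, rfl⟩ := mem_iff_getElem.1 ha
    rw [getElem_take]
    simpa using (hl.rel_get_of_le (a := ⟨i, by simp at hi; omega⟩) (b := ⟨k, hk⟩)
      (by simp at hi ⊢; omega)).trans_lt hv
  have := (take_sublist (k + 1) l).countP_le (p := (· < v))
  omega

end List

theorem orderStat_eq_of_countP {s : Multiset ℝ} {k : ℕ} {v : ℝ}
    (hlt : s.countP (· < v) ≤ k) (hle : k < s.countP (· ≤ v)) : orderStat s k = v := by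
  rw [← Multiset.sort_eq s (· ≤ ·), Multiset.coe_countP] at hlt hle
  have hk := hle.trans_le List.countP_le_length
  have hl := Multiset.pairwise_sort s (· ≤ ·)
  rw [orderStat, List.getD_eq_getElem _ _ hk]
  exact le_antisymm (hl.getElem_le_of_lt_countP hk hle) (hl.le_getElem_of_countP_le hk hlt)

section
variable {n : ℕ} {f : Fin (n+1) → ℝ}

lemma StrictMono.countP_map_univ_lt (hf : StrictMono f) (k : Fin (n+1)) :
    (Finset.univ.val.map f).countP (· < f k) = k := by
  rw [Multiset.countP_map, ← Fin.card_Iio k, ← Finset.filter_gt_eq_Iio, Finset.card_def,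
    Finset.filter_val]
  simp only [hf.lt_iff_lt]

lemma StrictMono.countP_map_univ_le (hf : StrictMono f) (k : Fin (n+1)) :
    (Finset.univ.val.map f).countP (· ≤ f k) = k + 1 := by
  rw [Multiset.countP_map, ← Fin.card_Iic k, ← Finset.filter_ge_eq_Iic, Finset.card_def,
    Finset.filter_val]
  simp only [hf.le_iff_le]

lemma StrictMono.orderStat_cons_map_of_le (hf : StrictMono f) {k : Fin (n+1)} {w : ℝ}
    (hw : f k ≤ w) : orderStat (w ::ₘ Finset.univ.val.map f) k = f k := by
  apply orderStat_eq_of_countP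
  · rw [Multiset.countP_cons, hf.countP_map_univ_lt, if_neg hw.not_gt, add_zero]
  · rw [Multiset.countP_cons, hf.countP_map_univ_le]; omega

lemma StrictMono.orderStat_cons_map_succ_of_ge (hf : StrictMono f) {k : Fin (n+1)} {w : ℝ}
    (hw : w ≤ f k) : orderStat (w ::ₘ Finset.univ.val.map f) (k + 1) = f k := by
  apply orderStat_eq_of_countP
  · rw [Multiset.countP_cons, hf.countP_map_univ_lt]; split <;> omega
  · rw [Multiset.countP_cons, hf.countP_map_univ_le, if_pos hw]; omega

theorem StrictMono.exists_orderStat_cons_eq (hf : StrictMono f) {a : ℕ → ℝ} (ha : Antitone a) :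
    ∃ c, ∀ k ≤ n + 1,
      orderStat (a k ::ₘ Finset.univ.val.map f) k = orderStat (c ::ₘ Finset.univ.val.map f) k := by
  classical
  set P : ℕ → Prop := fun k => ∀ j : Fin (n+1), j < k → f j < a k
  set K := Nat.findGreatest P (n + 1)
  have hK : K ≤ n + 1 := Nat.findGreatest_le _
  have hbelow : P K := Nat.findGreatest_spec (Nat.zero_le _) fun j hj => absurd hj j.val.not_lt_zero
  have habove : ∀ j : Fin (n+1), K ≤ j → a (j + 1) ≤ f j := by
    intro j hj
    obtain ⟨i, hi, hai⟩ : ∃ i : Fin (n+1), i < (j:ℕ) + 1 ∧ a (j + 1) ≤ f i := by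
      simpa [P] using Nat.findGreatest_is_greatest (Nat.lt_succ_of_le hj) (by omega)
    exact hai.trans (hf.monotone (Fin.le_iff_val_le_val.2 (by omega)))
  set c := if hKn : K < n + 1 then min (a K) (f ⟨K, hKn⟩) else a K
  have hc_ge : ∀ j : Fin (n+1), j < K → f j ≤ c := by
    intro j hj
    simp only [c]
    split_ifs with hKn
    · exact le_min (hbelow j hj).le (hf.monotone (Fin.le_iff_val_le_val.2 hj.le))
    · exact (hbelow j hj).le
  have hc_le : ∀ j : Fin (n+1), K ≤ j → c ≤ f j := by
    intro j hj
    simp only [c, dif_pos (hj.trans_lt j.isLt)]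
    exact (min_le_right _ _).trans (hf.monotone (Fin.le_iff_val_le_val.2 hj))
  refine ⟨c, fun k hk => ?_⟩
  rcases lt_trichotomy k K with hkK | rfl | hKk
  · obtain ⟨j, rfl⟩ : ∃ j : Fin (n+1), (j : ℕ) = k := ⟨⟨k, by omega⟩, rfl⟩
    exact (hf.orderStat_cons_map_of_le ((hbelow j hkK).le.trans (ha hkK.le))).trans
      (hf.orderStat_cons_map_of_le (hc_ge j hkK)).symm
  · by_cases hKn : K < n + 1
    · rcases le_total (a K) (f ⟨K, hKn⟩) with h | h
      · simp only [c, dif_pos hKn, min_eq_left h]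
      · have hcK : c = f ⟨K, hKn⟩ := by simp only [c, dif_pos hKn, min_eq_right h]
        rw [hcK]
        exact (hf.orderStat_cons_map_of_le (k := ⟨K, hKn⟩) h).trans
          (hf.orderStat_cons_map_of_le le_rfl).symm
    · simp only [c, dif_neg hKn]
  · obtain ⟨j, rfl⟩ : ∃ j : Fin (n+1), k = j + 1 := ⟨⟨k - 1, by omega⟩, by simp; omega⟩
    exact (hf.orderStat_cons_map_succ_of_ge (habove j (by omega))).trans
      (hf.orderStat_cons_map_succ_of_ge (hc_le j (by omega))).symm
end

lemma val_one : val 1 = 0 := HahnSeries.order_one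

lemma val_prod {ι : Type*} (s : Finset ι) {x : ι → Nov} (hx : ∀ i ∈ s, x i ≠ 0) :
    val (∏ i ∈ s, x i) = ∑ i ∈ s, val (x i) := by
  classical
  induction s using Finset.induction_on with
  | empty => exact val_one
  | insert i s hi ih =>
    have hs : ∀ j ∈ s, x j ≠ 0 := fun j hj => hx j (Finset.mem_insert_of_mem hj)
    rw [Finset.prod_insert hi, Finset.sum_insert hi, ← ih hs]
    exact HahnSeries.order_mul (hx i (Finset.mem_insert_self i s)) (Finset.prod_ne_zero_iff.2 hs)

lemma val_single {s : ℝ} {r : ℂ} (hr : r ≠ 0) : val (HahnSeries.single s r) = s :=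
  HahnSeries.order_single hr

lemma orderTop_one_add_single (s : ℝ) :
    (1 + HahnSeries.single s (1 : ℂ)).orderTop = ↑(min 0 s) := by
  rcases lt_trichotomy s 0 with h | rfl | h
  · rw [min_eq_right h.le, add_comm, HahnSeries.orderTop_add_eq_left] <;>
      simp [HahnSeries.orderTop_single, h]
  · rw [← HahnSeries.single_zero_one, ← HahnSeries.single_add,
      HahnSeries.orderTop_single (by norm_num)]
    simp
  · rw [min_eq_left h.le, HahnSeries.orderTop_add_eq_left] <;>
      simp [HahnSeries.orderTop_single, h]

lemma one_add_single_ne_zero (s : ℝ) : 1 + HahnSeries.single s (1 : ℂ) ≠ 0 := by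
  simp [← HahnSeries.orderTop_ne_top, orderTop_one_add_single]

lemma val_one_add_single (s : ℝ) : val (1 + HahnSeries.single s (1 : ℂ)) = min 0 s := by
  exact_mod_cast (HahnSeries.order_eq_orderTop_of_ne_zero (one_add_single_ne_zero s)).trans
    (orderTop_one_add_single s)

section
variable {n : ℕ}

noncomputable def fmapHead (x : Fin (n+2) → Nov) (y : Nov) (k : ℕ) : ℝ :=
  (∑ j : Fin (n+2), (((j:ℕ):ℝ) - k) * val (x j)) + k * min 0 (val y)

lemma fmapHead_eq (x : Fin (n+2) → Nov) (y : Nov) (k : ℕ) :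
    fmapHead x y k
      = ∑ j : Fin (n+2), ((j:ℕ):ℝ) * val (x j) - k * (∑ j, val (x j) - min 0 (val y)) := by
  simp only [fmapHead, sub_mul, Finset.sum_sub_distrib, ← Finset.mul_sum]
  ring

lemma antitone_fmapHead {x : Fin (n+2) → Nov} {y : Nov} (hx : ∀ j, x j ≠ 0)
    (hxy : ∏ j, x j = 1 + y) : Antitone (fmapHead x y) := by
  have hV : min 0 (val y) ≤ ∑ j, val (x j) := by
    have hprod : ∏ j, x j ≠ 0 := Finset.prod_ne_zero_iff.2 fun j _ => hx j
    rw [← val_prod _ fun j _ => hx j, hxy]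
    have h := HahnSeries.min_order_le_order_add (x := (1 : Nov)) (y := y) (hxy ▸ hprod)
    rwa [← val, val_one] at h
  intro k l hkl
  simp only [fmapHead_eq]
  have : (k:ℝ) ≤ l := by exact_mod_cast hkl
  nlinarith

lemma Fmap_eq_gammaMap {ψ : Fin (n+1) → ℝ → ℝ} {x : Fin (n+2) → Nov} {y : Nov} {c : ℝ}
    (h : ∀ k ≤ n + 1, orderStat (fmapHead x y k ::ₘ Finset.univ.val.map fun j => ψ j (val y)) k
      = orderStat (c ::ₘ Finset.univ.val.map fun j => ψ j (val y)) k) :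
    Fmap n ψ x y = gammaMap n ψ (val y, c) := by
  funext i
  simp only [Fmap, gammaMap]
  split_ifs with hi
  · rfl
  · exact h i (by omega)

end

lemma exists_fmapHead_eq_const (n : ℕ) (s c : ℝ) :
    ∃ x : Fin (n+2) → Nov, (∀ j, x j ≠ 0) ∧ ∏ j, x j = 1 + HahnSeries.single s 1 ∧
      ∀ k, fmapHead x (HahnSeries.single s 1) k = c := by
  have h1y := one_add_single_ne_zero s
  have hval₀ : val ((1 + HahnSeries.single s 1) * HahnSeries.single (-c) 1) = min 0 s - c := by
    rw [val, HahnSeries.order_mul h1y (HahnSeries.single_ne_zero one_ne_zero), ← val, ← val,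
      val_one_add_single, val_single one_ne_zero, sub_eq_add_neg]
  refine ⟨Fin.cons ((1 + HahnSeries.single s 1) * HahnSeries.single (-c) 1)
    (Fin.cons (HahnSeries.single c 1) 1), ?_, ?_, fun k => ?_⟩
  · refine Fin.cases ?_ (Fin.cases ?_ fun _ => ?_) <;> simp [h1y]
  · simp [Fin.prod_univ_succ, mul_assoc, HahnSeries.single_mul_single]
  · simp [fmapHead_eq, Fin.sum_univ_succ, hval₀, val_single, val_one]

/-- The image of `F` over all pairs `(x,y)` with `x ∈ (Λ^×)^{n+2}`,
`y ∈ Λ^×` and `∏_j x_j = 1 + y` equals the image of `γ`. -/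
theorem Fmap_image_eq_gamma_image (n : ℕ) (ψ : Fin (n+1) → ℝ → ℝ)
    (hord : ∀ s : ℝ, StrictMono fun j => ψ j s) :
    {p : Fin (n+3) → ℝ | ∃ (x : Fin (n+2) → Nov) (y : Nov),
        (∀ j, x j ≠ 0) ∧ y ≠ 0 ∧ (∏ j, x j) = 1 + y ∧ p = Fmap n ψ x y}
      = Set.range (gammaMap n ψ) := by
  ext p
  constructor
  · rintro ⟨x, y, hx, -, hxy, rfl⟩
    obtain ⟨c, hc⟩ := (hord (val y)).exists_orderStat_cons_eq (antitone_fmapHead hx hxy)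
    exact ⟨(val y, c), (Fmap_eq_gammaMap hc).symm⟩
  · rintro ⟨⟨s, c⟩, rfl⟩
    obtain ⟨x, hx, hxy, hc⟩ := exists_fmapHead_eq_const n s c
    refine ⟨x, _, hx, HahnSeries.single_ne_zero one_ne_zero, hxy, ?_⟩
    rw [Fmap_eq_gammaMap (c := c) fun k _ => by rw [hc], val_single one_ne_zero]
end

section
/- Let a_0, …, a_n ∈ ℂ be pairwise distinct, let 0 ≤ k ≤ n+1 and let r > 0 satisfy |a_i| < r for every 0 ≤ i ≤ k−1 and |a_i| > r for every k ≤ i ≤ n. Let 𝔲, 𝔳 be holomorphic disk components with 𝔲(ζ)·𝔳(ζ) = ∏_{i=0}^{n} (rζ − a_i) for all ζ ∈ 𝔻 and |𝔲(ζ)| = |𝔳(ζ)| for all ζ with |ζ| = 1. Then 𝔲 and 𝔳 have no zeros on the unit circle, and there exist a subset I ⊆ {0, …, k−1} and λ ∈ ℂ with |λ| = 1 such that: (i) the zero set of 𝔲 in 𝔻 is exactly {a_i/r : i ∈ I} and the zero set of 𝔳 in 𝔻 is exactly {a_i/r : i ∈ {0,…,k−1} ∖ I}; (ii) for every ζ ∈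 𝔻, 𝔲(ζ)·∏_{i∈I}(r − conj(a_i)ζ)·∏_{i∈{0,…,k−1}∖I}(rζ − a_i) = λ·𝔳(ζ)·∏_{i∈{0,…,k−1}∖I}(r − conj(a_i)ζ)·∏_{i∈I}(rζ − a_i). -/
/-- A *holomorphic disk component*: a function on the closed unit disk `𝔻 ⊆ ℂ` which is
continuous on `𝔻` and complex differentiable on the open unit disk. -/
def IsHolomorphicDiskComponent (f : ℂ → ℂ) : Prop :=
  ContinuousOn f (Metric.closedBall 0 1) ∧ DifferentiableOn ℂ f (Metric.ball 0 1)

/-!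
After rescaling, `u v = c ∏ᵢ (ζ - bᵢ)` with `bᵢ = aᵢ / r`, where the `bᵢ` with `i < k` lie in the
open disk and the others outside the closed disk. Every inner `bᵢ` is a zero of `u` or of `v`.
Dividing `u` by `ζ - bᵢ` at its inner zeros `i ∈ I` and `v` at the remaining inner `bᵢ` leaves
holomorphic `p`, `q` with `p q = c ∏_{outer} (ζ - bᵢ)`, so both are zero-free on the closed disk.
Trading each removed factor `ζ - bᵢ` for `1 - conj(bᵢ) ζ`, which has the same modulus on the circle
and no zero in the closed disk, gives two zero-free functions with equal moduli on the circle. Their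
quotient and its inverse are bounded by `1` (maximum principle), so the quotient has constant
modulus `1` and is therefore a unimodular constant `λ`.
-/

open Metric Finset

namespace IsHolomorphicDiskComponent

variable {f g : ℂ → ℂ}

theorem diffContOnCl (hf : IsHolomorphicDiskComponent f) : DiffContOnCl ℂ f (ball 0 1) :=
  ⟨hf.2, by rw [closure_ball 0 one_ne_zero]; exact hf.1⟩

theorem mul (hf : IsHolomorphicDiskComponent f) (hg : IsHolomorphicDiskComponent g) :
    IsHolomorphicDiskComponent (fun ζ => f ζ * g ζ) :=
  ⟨hf.1.mul hg.1, hf.2.mul hg.2⟩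

theorem div (hf : IsHolomorphicDiskComponent f) (hg : IsHolomorphicDiskComponent g)
    (hg0 : ∀ ζ ∈ closedBall (0 : ℂ) 1, g ζ ≠ 0) :
    IsHolomorphicDiskComponent (fun ζ => f ζ / g ζ) :=
  ⟨hf.1.div hg.1 hg0, hf.2.div hg.2 fun ζ hζ => hg0 ζ (ball_subset_closedBall hζ)⟩

theorem _root_.Differentiable.isHolomorphicDiskComponent (hf : Differentiable ℂ f) :
    IsHolomorphicDiskComponent f :=
  ⟨hf.continuous.continuousOn, hf.differentiableOn⟩

theorem dslope {c : ℂ} (hf : IsHolomorphicDiskComponent f) (hc : c ∈ ball (0 : ℂ) 1) :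
    IsHolomorphicDiskComponent (_root_.dslope f c) :=
  ⟨(continuousOn_dslope (closedBall_mem_nhds_of_mem hc)).2
      ⟨hf.1, hf.2.differentiableAt (isOpen_ball.mem_nhds hc)⟩,
    (Complex.differentiableOn_dslope (isOpen_ball.mem_nhds hc)).2 hf.2⟩

theorem exists_eq_sub_mul (hf : IsHolomorphicDiskComponent f) {c : ℂ}
    (hc : c ∈ ball (0 : ℂ) 1) (hfc : f c = 0) :
    ∃ g, IsHolomorphicDiskComponent g ∧ ∀ ζ, f ζ = (ζ - c) * g ζ :=
  ⟨_root_.dslope f c, hf.dslope hc, fun ζ => by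
    simpa [hfc] using (sub_smul_dslope f c ζ).symm⟩

theorem exists_eq_prod_sub_mul {ι : Type*} [DecidableEq ι] (hf : IsHolomorphicDiskComponent f)
    {s : Finset ι} {b : ι → ℂ} (hb : ∀ i ∈ s, b i ∈ ball (0 : ℂ) 1) (hinj : Set.InjOn b s)
    (hfb : ∀ i ∈ s, f (b i) = 0) :
    ∃ g, IsHolomorphicDiskComponent g ∧ ∀ ζ, f ζ = (∏ i ∈ s, (ζ - b i)) * g ζ := by
  induction s using Finset.induction_on generalizing f with
  | empty => exact ⟨f, hf, by simp⟩
  | @insert i s hi ih =>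
    obtain ⟨g, hg, hfg⟩ := hf.exists_eq_sub_mul (hb i (mem_insert_self i s))
      (hfb i (mem_insert_self i s))
    have hgb : ∀ j ∈ s, g (b j) = 0 := fun j hj => by
      have hji : b j - b i ≠ 0 := sub_ne_zero.2 fun h =>
        hi (hinj (mem_insert_of_mem hj) (mem_insert_self i s) h ▸ hj)
      simpa [hfg, hji] using hfb j (mem_insert_of_mem hj)
    obtain ⟨h, hh, hgh⟩ := ih hg (fun j hj => hb j (mem_insert_of_mem hj))
      (hinj.mono (by simp)) hgb
    exact ⟨h, hh, fun ζ => by rw [hfg, hgh, prod_insert hi]; ring⟩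

theorem norm_le_of_forall_norm_eq_one (hf : IsHolomorphicDiskComponent f) {C : ℝ}
    (hC : ∀ ζ : ℂ, ‖ζ‖ = 1 → ‖f ζ‖ ≤ C) {ζ : ℂ} (hζ : ζ ∈ closedBall (0 : ℂ) 1) :
    ‖f ζ‖ ≤ C :=
  Complex.norm_le_of_forall_mem_frontier_norm_le isBounded_ball hf.diffContOnCl
    (fun z hz => hC z (by rw [frontier_ball 0 one_ne_zero] at hz; simpa using hz))
    (by rwa [closure_ball 0 one_ne_zero])

theorem eq_const_of_norm_eq_one (hf : IsHolomorphicDiskComponent f)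
    (hf0 : ∀ ζ ∈ closedBall (0 : ℂ) 1, f ζ ≠ 0) (hf1 : ∀ ζ : ℂ, ‖ζ‖ = 1 → ‖f ζ‖ = 1) :
    ∀ ζ ∈ closedBall (0 : ℂ) 1, f ζ = f 0 := by
  have hinv : IsHolomorphicDiskComponent (fun ζ => 1 / f ζ) :=
    (differentiable_const 1).isHolomorphicDiskComponent.div hf hf0
  have hnorm : ∀ ζ ∈ closedBall (0 : ℂ) 1, ‖f ζ‖ = 1 := fun ζ hζ => by
    have hle := hf.norm_le_of_forall_norm_eq_one (fun z hz => (hf1 z hz).le) hζ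
    have hge := hinv.norm_le_of_forall_norm_eq_one (C := 1) (fun z hz => by simp [hf1 z hz]) hζ
    rw [norm_div, norm_one, div_le_one (norm_pos_iff.2 (hf0 ζ hζ))] at hge
    exact le_antisymm hle hge
  have hmax : IsMaxOn (norm ∘ f) (ball 0 1) 0 := fun z hz => by
    simp [hnorm z (ball_subset_closedBall hz), hnorm 0 (mem_closedBall_self zero_le_one)]
  intro ζ hζ
  refine Complex.eqOn_closure_of_isPreconnected_of_isMaxOn_norm
    (convex_ball 0 1).isPreconnected isOpen_ball hf.diffContOnCl (mem_ball_self one_pos) hmax ?_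
  rwa [closure_ball 0 one_ne_zero]

theorem exists_eq_mul_of_norm_eq (hf : IsHolomorphicDiskComponent f)
    (hg : IsHolomorphicDiskComponent g) (hf0 : ∀ ζ ∈ closedBall (0 : ℂ) 1, f ζ ≠ 0)
    (hg0 : ∀ ζ ∈ closedBall (0 : ℂ) 1, g ζ ≠ 0) (hfg : ∀ ζ : ℂ, ‖ζ‖ = 1 → ‖f ζ‖ = ‖g ζ‖) :
    ∃ lam : ℂ, ‖lam‖ = 1 ∧ ∀ ζ ∈ closedBall (0 : ℂ) 1, f ζ = lam * g ζ := by
  have hq0 : ∀ ζ ∈ closedBall (0 : ℂ) 1, f ζ / g ζ ≠ 0 := fun ζ hζ =>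
    div_ne_zero (hf0 ζ hζ) (hg0 ζ hζ)
  have hq1 : ∀ ζ : ℂ, ‖ζ‖ = 1 → ‖f ζ / g ζ‖ = 1 := fun ζ hζ => by
    have : ζ ∈ closedBall (0 : ℂ) 1 := by simp [hζ]
    rw [norm_div, hfg ζ hζ, div_self (norm_ne_zero_iff.2 (hg0 ζ this))]
  have hconst := (hf.div hg hg0).eq_const_of_norm_eq_one hq0 hq1
  have h1 : (1 : ℂ) ∈ closedBall (0 : ℂ) 1 := by simp
  refine ⟨f 0 / g 0, by rw [← hconst 1 h1]; exact hq1 1 (by simp), fun ζ hζ => ?_⟩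
  rw [← hconst ζ hζ, div_mul_cancel₀ _ (hg0 ζ hζ)]

end IsHolomorphicDiskComponent

theorem eqOn_closedBall_of_prod_sub_mul_eq {ι : Type*} {f g : ℂ → ℂ}
    (hf : ContinuousOn f (closedBall 0 1)) (hg : ContinuousOn g (closedBall 0 1))
    (s : Finset ι) (b : ι → ℂ)
    (h : ∀ ζ ∈ closedBall (0 : ℂ) 1, (∏ i ∈ s, (ζ - b i)) * f ζ = (∏ i ∈ s, (ζ - b i)) * g ζ) :
    Set.EqOn f g (closedBall 0 1) := by
  set T : Set ℂ := b '' s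
  have hdense : Dense Tᶜ := ((s.finite_toSet.image b).countable).dense_compl ℂ
  have hoff : Set.EqOn f g (closedBall 0 1 \ T) := fun ζ ⟨hζ, hζT⟩ => by
    refine mul_left_cancel₀ (prod_ne_zero_iff.2 fun i hi => sub_ne_zero.2 ?_) (h ζ hζ)
    rintro rfl
    exact hζT ⟨i, hi, rfl⟩
  refine hoff.of_subset_closure hf hg Set.sdiff_subset ?_
  calc closedBall (0 : ℂ) 1 = closure (ball 0 1) := (closure_ball 0 one_ne_zero).symm
    _ ⊆ closure (closure (ball 0 1 ∩ Tᶜ)) :=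
        closure_mono (hdense.open_subset_closure_inter isOpen_ball)
    _ ⊆ closure (closedBall 0 1 \ T) := by
        rw [closure_closure]
        exact closure_mono (Set.inter_subset_inter_left _ ball_subset_closedBall)

theorem norm_one_sub_conj_mul_eq_norm_sub {ζ : ℂ} (hζ : ‖ζ‖ = 1) (β : ℂ) :
    ‖1 - starRingEnd ℂ β * ζ‖ = ‖ζ - β‖ := by
  have hζζ : ζ * starRingEnd ℂ ζ = 1 := by
    rw [Complex.mul_conj, Complex.normSq_eq_norm_sq, hζ]; norm_num
  calc ‖1 - starRingEnd ℂ β * ζ‖ = ‖ζ * starRingEnd ℂ (ζ - β)‖ := by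
        congr 1; rw [map_sub]; linear_combination -hζζ
    _ = ‖ζ - β‖ := by rw [norm_mul, hζ, one_mul, Complex.norm_conj]

theorem one_sub_conj_mul_ne_zero {β ζ : ℂ} (hβ : ‖β‖ < 1) (hζ : ‖ζ‖ ≤ 1) :
    1 - starRingEnd ℂ β * ζ ≠ 0 := by
  rw [sub_ne_zero]
  intro h
  have : ‖starRingEnd ℂ β * ζ‖ < 1 := by
    rw [norm_mul, Complex.norm_conj]
    nlinarith [norm_nonneg β, norm_nonneg ζ]
  rw [← h, norm_one] at this
  exact lt_irrefl _ this

theorem setOf_eq_zero_of_eq_prod_sub_mul {ι : Type*} {f p : ℂ → ℂ} {s : Finset ι} {b : ι → ℂ}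
    (hs : ∀ i ∈ s, b i ∈ closedBall (0 : ℂ) 1) (hp : ∀ ζ ∈ closedBall (0 : ℂ) 1, p ζ ≠ 0)
    (hf : ∀ ζ, f ζ = (∏ i ∈ s, (ζ - b i)) * p ζ) :
    {ζ ∈ closedBall (0 : ℂ) 1 | f ζ = 0} = b '' s := by
  ext ζ
  simp only [Set.mem_ofPred_eq, Set.mem_image, mem_coe, hf]
  constructor
  · rintro ⟨hζ, h0⟩
    obtain ⟨i, hi, hζi⟩ := prod_eq_zero_iff.1 ((mul_eq_zero.1 h0).resolve_right (hp ζ hζ))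
    exact ⟨i, hi, (sub_eq_zero.1 hζi).symm⟩
  · rintro ⟨i, hi, rfl⟩
    exact ⟨hs i hi, by rw [prod_eq_zero hi (sub_self _), zero_mul]⟩

theorem ne_zero_of_mul_eq_prod_of_norm_eq_one {ι : Type*} [Fintype ι] {u v : ℂ → ℂ} {c : ℂ}
    {b : ι → ℂ} (hc : c ≠ 0) (hb1 : ∀ i, ‖b i‖ ≠ 1)
    (huv : ∀ ζ ∈ closedBall (0 : ℂ) 1, u ζ * v ζ = c * ∏ i, (ζ - b i)) {ζ : ℂ} (hζ : ‖ζ‖ = 1) :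
    u ζ ≠ 0 ∧ v ζ ≠ 0 := by
  refine mul_ne_zero_iff.1 ?_
  rw [huv ζ (by simp [hζ])]
  refine mul_ne_zero hc (prod_ne_zero_iff.2 fun i _ h => hb1 i ?_)
  rw [← sub_eq_zero.1 h, hζ]

section Factorization

variable {ι : Type*} [Fintype ι] [DecidableEq ι] {u v : ℂ → ℂ} {c : ℂ} {b : ι → ℂ}
  {S : Finset ι}

theorem IsHolomorphicDiskComponent.exists_factorization_of_mul_eq_prod
    (hu : IsHolomorphicDiskComponent u) (hv : IsHolomorphicDiskComponent v) (hc : c ≠ 0)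
    (hb : Function.Injective b) (hS_in : ∀ i ∈ S, ‖b i‖ < 1) (hS_out : ∀ i ∉ S, 1 < ‖b i‖)
    (huv : ∀ ζ ∈ closedBall (0 : ℂ) 1, u ζ * v ζ = c * ∏ i, (ζ - b i)) :
    ∃ I ⊆ S, ∃ p q : ℂ → ℂ, IsHolomorphicDiskComponent p ∧ IsHolomorphicDiskComponent q ∧
      (∀ ζ ∈ closedBall (0 : ℂ) 1, p ζ ≠ 0 ∧ q ζ ≠ 0) ∧
      ∀ ζ, u ζ = (∏ i ∈ I, (ζ - b i)) * p ζ ∧ v ζ = (∏ i ∈ S \ I, (ζ - b i)) * q ζ := by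
  classical
  set I := S.filter (fun i => u (b i) = 0)
  have hb_ball : ∀ i ∈ S, b i ∈ ball (0 : ℂ) 1 := fun i hi => by simpa using hS_in i hi
  have hv_zero : ∀ i ∈ S \ I, v (b i) = 0 := fun i hi => by
    simp only [I, mem_sdiff, mem_filter, not_and] at hi
    have := huv (b i) (ball_subset_closedBall (hb_ball i hi.1))
    rw [prod_eq_zero (mem_univ i) (sub_self _), mul_zero] at this
    exact (mul_eq_zero.1 this).resolve_left (hi.2 hi.1)
  obtain ⟨p, hp, hup⟩ := hu.exists_eq_prod_sub_mul (s := I)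
    (fun i hi => hb_ball i (filter_subset _ _ hi)) hb.injOn (fun i hi => (mem_filter.1 hi).2)
  obtain ⟨q, hq, hvq⟩ := hv.exists_eq_prod_sub_mul (fun i hi => hb_ball i (sdiff_subset hi))
    hb.injOn hv_zero
  have hpq : Set.EqOn (fun ζ => p ζ * q ζ) (fun ζ => c * ∏ i ∈ Sᶜ, (ζ - b i))
      (closedBall 0 1) := by
    refine eqOn_closedBall_of_prod_sub_mul_eq (hp.1.mul hq.1) (by fun_prop) S b fun ζ hζ => ?_
    have h := huv ζ hζ
    rw [hup, hvq, ← prod_mul_prod_compl S] at h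
    rw [← prod_sdiff (s₁ := I) (filter_subset _ S)] at h ⊢
    linear_combination h
  refine ⟨I, filter_subset _ _, p, q, hp, hq, fun ζ hζ => mul_ne_zero_iff.1 ?_,
    fun ζ => ⟨hup ζ, hvq ζ⟩⟩
  rw [show p ζ * q ζ = _ from hpq hζ]
  refine mul_ne_zero hc (prod_ne_zero_iff.2 fun i hi => sub_ne_zero.2 ?_)
  rintro rfl
  exact (mem_closedBall_zero_iff.1 hζ).not_gt (hS_out _ (mem_compl.1 hi))

theorem IsHolomorphicDiskComponent.exists_blaschke_of_mul_eq_prod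
    (hu : IsHolomorphicDiskComponent u) (hv : IsHolomorphicDiskComponent v) (hc : c ≠ 0)
    (hb : Function.Injective b) (hS_in : ∀ i ∈ S, ‖b i‖ < 1) (hS_out : ∀ i ∉ S, 1 < ‖b i‖)
    (huv : ∀ ζ ∈ closedBall (0 : ℂ) 1, u ζ * v ζ = c * ∏ i, (ζ - b i))
    (hbd : ∀ ζ : ℂ, ‖ζ‖ = 1 → ‖u ζ‖ = ‖v ζ‖) :
    ∃ I ⊆ S, ∃ lam : ℂ, ‖lam‖ = 1 ∧
      {ζ ∈ closedBall (0 : ℂ) 1 | u ζ = 0} = b '' I ∧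
      {ζ ∈ closedBall (0 : ℂ) 1 | v ζ = 0} = b '' ↑(S \ I) ∧
      ∀ ζ ∈ closedBall (0 : ℂ) 1,
        u ζ * (∏ i ∈ I, (1 - starRingEnd ℂ (b i) * ζ)) * ∏ i ∈ S \ I, (ζ - b i) =
          lam * v ζ * (∏ i ∈ S \ I, (1 - starRingEnd ℂ (b i) * ζ)) * ∏ i ∈ I, (ζ - b i) := by
  obtain ⟨I, hIS, p, q, hp, hq, hpq0, hfac⟩ :=
    hu.exists_factorization_of_mul_eq_prod hv hc hb hS_in hS_out huv
  set B : Finset ι → ℂ → ℂ := fun s ζ => ∏ i ∈ s, (1 - starRingEnd ℂ (b i) * ζ)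
  have hB : ∀ s ⊆ S, IsHolomorphicDiskComponent (B s) ∧
      ∀ ζ ∈ closedBall (0 : ℂ) 1, B s ζ ≠ 0 := fun s hs =>
    ⟨Differentiable.isHolomorphicDiskComponent (by fun_prop), fun ζ hζ =>
      prod_ne_zero_iff.2 fun i hi =>
        one_sub_conj_mul_ne_zero (hS_in i (hs hi)) (mem_closedBall_zero_iff.1 hζ)⟩
  have hB_norm : ∀ s ζ, ‖ζ‖ = 1 → ‖B s ζ‖ = ‖∏ i ∈ s, (ζ - b i)‖ := fun s ζ hζ => by
    simp only [B, norm_prod, norm_one_sub_conj_mul_eq_norm_sub hζ]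
  obtain ⟨lam, hlam, hpq⟩ :=
    (hp.mul (hB I hIS).1).exists_eq_mul_of_norm_eq (hq.mul (hB (S \ I) sdiff_subset).1)
      (fun ζ hζ => mul_ne_zero (hpq0 ζ hζ).1 ((hB I hIS).2 ζ hζ))
      (fun ζ hζ => mul_ne_zero (hpq0 ζ hζ).2 ((hB (S \ I) sdiff_subset).2 ζ hζ))
      (fun ζ hζ => by
        rw [norm_mul, norm_mul, hB_norm _ _ hζ, hB_norm _ _ hζ, mul_comm, ← norm_mul,
          ← (hfac ζ).1, mul_comm, ← norm_mul, ← (hfac ζ).2, hbd ζ hζ])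
  have hS_closedBall : ∀ i ∈ S, b i ∈ closedBall (0 : ℂ) 1 := fun i hi => by
    simpa using (hS_in i hi).le
  refine ⟨I, hIS, lam, hlam,
    setOf_eq_zero_of_eq_prod_sub_mul (fun i hi => hS_closedBall i (hIS hi))
      (fun ζ hζ => (hpq0 ζ hζ).1) (fun ζ => (hfac ζ).1),
    setOf_eq_zero_of_eq_prod_sub_mul (fun i hi => hS_closedBall i (sdiff_subset hi))
      (fun ζ hζ => (hpq0 ζ hζ).2) (fun ζ => (hfac ζ).2), fun ζ hζ => ?_⟩
  rw [(hfac ζ).1, (hfac ζ).2]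
  linear_combination (∏ i ∈ I, (ζ - b i)) * (∏ i ∈ S \ I, (ζ - b i)) * hpq ζ hζ

end Factorization

theorem blaschke_classification_general (n : ℕ) (a : Fin (n+1) → ℂ) (ha : Function.Injective a)
    (k : ℕ) (r : ℝ) (hr : 0 < r)
    (hlt : ∀ i : Fin (n+1), (i:ℕ) < k → ‖a i‖ < r)
    (hgt : ∀ i : Fin (n+1), k ≤ (i:ℕ) → r < ‖a i‖)
    (u v : ℂ → ℂ)
    (hu : IsHolomorphicDiskComponent u) (hv : IsHolomorphicDiskComponent v)
    (huv : ∀ ζ ∈ Metric.closedBall (0:ℂ) 1,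
      u ζ * v ζ = ∏ i : Fin (n+1), ((r:ℂ) * ζ - a i))
    (hbd : ∀ ζ : ℂ, ‖ζ‖ = 1 → ‖u ζ‖ = ‖v ζ‖) :
    (∀ ζ : ℂ, ‖ζ‖ = 1 → u ζ ≠ 0 ∧ v ζ ≠ 0) ∧
    ∃ (I : Finset (Fin (n+1))) (lam : ℂ),
      (∀ i ∈ I, (i:ℕ) < k) ∧ ‖lam‖ = 1 ∧
      ({ζ ∈ Metric.closedBall (0:ℂ) 1 | u ζ = 0}
        = (fun i : Fin (n+1) => a i / (r:ℂ)) '' ↑I) ∧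
      ({ζ ∈ Metric.closedBall (0:ℂ) 1 | v ζ = 0}
        = (fun i : Fin (n+1) => a i / (r:ℂ)) '' {i : Fin (n+1) | (i:ℕ) < k ∧ i ∉ I}) ∧
      (∀ ζ ∈ Metric.closedBall (0:ℂ) 1,
        u ζ * (∏ i ∈ I, ((r:ℂ) - (starRingEnd ℂ) (a i) * ζ))
            * (∏ i ∈ Finset.univ.filter (fun i : Fin (n+1) => (i:ℕ) < k ∧ i ∉ I),
                ((r:ℂ) * ζ - a i))
          = lam * v ζ
            * (∏ i ∈ Finset.univ.filter (fun i : Fin (n+1) => (i:ℕ) < k ∧ i ∉ I),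
                ((r:ℂ) - (starRingEnd ℂ) (a i) * ζ))
            * (∏ i ∈ I, ((r:ℂ) * ζ - a i))) := by
  have hrC : (r : ℂ) ≠ 0 := Complex.ofReal_ne_zero.2 hr.ne'
  set b : Fin (n+1) → ℂ := fun i => a i / r
  have hb_norm : ∀ i, ‖b i‖ = ‖a i‖ / r := fun i => by simp [b, abs_of_pos hr]
  have hsub : ∀ i ζ, (r : ℂ) * ζ - a i = r * (ζ - b i) := fun i ζ => by
    simp only [b]; field_simp
  have hsub_conj : ∀ i ζ,
      (r : ℂ) - starRingEnd ℂ (a i) * ζ = r * (1 - starRingEnd ℂ (b i) * ζ) := fun i ζ => by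
    simp only [b, map_div₀, Complex.conj_ofReal]; field_simp
  set S := univ.filter (fun i : Fin (n+1) => (i : ℕ) < k)
  have hS_in : ∀ i ∈ S, ‖b i‖ < 1 := fun i hi => by
    rw [hb_norm, div_lt_one hr]; exact hlt i (mem_filter.1 hi).2
  have hS_out : ∀ i ∉ S, 1 < ‖b i‖ := fun i hi => by
    rw [hb_norm, one_lt_div hr]; exact hgt i (by simpa [S] using hi)
  have huv' : ∀ ζ ∈ closedBall (0 : ℂ) 1, u ζ * v ζ = r ^ (n + 1) * ∏ i, (ζ - b i) :=
    fun ζ hζ => by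
      simp only [huv ζ hζ, hsub, prod_mul_distrib, prod_const, card_univ, Fintype.card_fin]
  have hb : Function.Injective b := fun i j h => ha (by simpa [b, hrC] using h)
  obtain ⟨I, hIS, lam, hlam, hzu, hzv, hid⟩ :=
    hu.exists_blaschke_of_mul_eq_prod hv (pow_ne_zero _ hrC) hb hS_in hS_out huv' hbd
  have hJ : univ.filter (fun i : Fin (n+1) => (i : ℕ) < k ∧ i ∉ I) = S \ I := by
    ext i; simp [S]
  refine ⟨fun ζ hζ => ne_zero_of_mul_eq_prod_of_norm_eq_one (pow_ne_zero _ hrC)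
      (fun i => by by_cases hi : i ∈ S; exacts [(hS_in i hi).ne, (hS_out i hi).ne']) huv' hζ,
    I, lam, fun i hi => (mem_filter.1 (hIS hi)).2, hlam, hzu, ?_, fun ζ hζ => ?_⟩
  · rw [hzv, ← hJ, coe_filter]; simp only [mem_univ, true_and]
  · rw [hJ]
    simp only [hsub, hsub_conj, prod_mul_distrib, prod_const]
    linear_combination (r : ℂ) ^ #I * (r : ℂ) ^ #(S \ I) * hid ζ hζ

/-- Classification of holomorphic disks `(𝔲, 𝔳, rζ)` in the
`Aₙ`-smoothing with boundary on the fiber `L₍₀,ᵣ₎`: if `𝔲·𝔳 = ∏_i (rζ − a i)` on `𝔻`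
and `|𝔲| = |𝔳|` on the unit circle, then `𝔲, 𝔳` have no zeros on the circle and there
are `I ⊆ {0,…,k−1}` and a unimodular constant `λ` such that the zero sets of `𝔲` and
`𝔳` in `𝔻` are `{a i / r : i ∈ I}` and `{a i / r : i ∈ {0,…,k−1} ∖ I}` respectively,
and `𝔲` agrees with `λ·𝔳` after matching Blaschke factors. -/
theorem blaschke_classification (n : ℕ) (a : Fin (n+1) → ℂ) (ha : Function.Injective a)
    (k : ℕ) (hk : k ≤ n + 1) (r : ℝ) (hr : 0 < r)
    (hlt : ∀ i : Fin (n+1), (i:ℕ) < k → ‖a i‖ < r)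
    (hgt : ∀ i : Fin (n+1), k ≤ (i:ℕ) → r < ‖a i‖)
    (u v : ℂ → ℂ)
    (hu : IsHolomorphicDiskComponent u) (hv : IsHolomorphicDiskComponent v)
    (huv : ∀ ζ ∈ Metric.closedBall (0:ℂ) 1,
      u ζ * v ζ = ∏ i : Fin (n+1), ((r:ℂ) * ζ - a i))
    (hbd : ∀ ζ : ℂ, ‖ζ‖ = 1 → ‖u ζ‖ = ‖v ζ‖) :
    (∀ ζ : ℂ, ‖ζ‖ = 1 → u ζ ≠ 0 ∧ v ζ ≠ 0) ∧
    ∃ (I : Finset (Fin (n+1))) (lam : ℂ),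
      (∀ i ∈ I, (i:ℕ) < k) ∧ ‖lam‖ = 1 ∧
      ({ζ ∈ Metric.closedBall (0:ℂ) 1 | u ζ = 0}
        = (fun i : Fin (n+1) => a i / (r:ℂ)) '' ↑I) ∧
      ({ζ ∈ Metric.closedBall (0:ℂ) 1 | v ζ = 0}
        = (fun i : Fin (n+1) => a i / (r:ℂ)) '' {i : Fin (n+1) | (i:ℕ) < k ∧ i ∉ I}) ∧
      (∀ ζ ∈ Metric.closedBall (0:ℂ) 1,
        u ζ * (∏ i ∈ I, ((r:ℂ) - (starRingEnd ℂ) (a i) * ζ))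
            * (∏ i ∈ Finset.univ.filter (fun i : Fin (n+1) => (i:ℕ) < k ∧ i ∉ I),
                ((r:ℂ) * ζ - a i))
          = lam * v ζ
            * (∏ i ∈ Finset.univ.filter (fun i : Fin (n+1) => (i:ℕ) < k ∧ i ∉ I),
                ((r:ℂ) - (starRingEnd ℂ) (a i) * ζ))
            * (∏ i ∈ I, ((r:ℂ) * ζ - a i))) :=
  blaschke_classification_general n a ha k r hr hlt hgt u v hu hv huv hbd
end
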